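/- In the group S₃^ℤ with presentation ⟨σ₁, σ₂ ∣ σ₁σ₂σ₁ = σ₂σ₁σ₂, σ₁² = σ₂²⟩, the element σ₁² has infinite order; equivalently, the cyclic subgroup of S₃^ℤ generated by σ₁² is infinite. -/

import Mathlib

/-- Relators of the group `S₃^ℤ`: `σ₁σ₂σ₁σ₂⁻¹σ₁⁻¹σ₂⁻¹` and `σ₁²σ₂⁻²`. -/
def S3ZRels : Set (FreeGroup (Fin 2)) :=
  { FreeGroup.of 0 * FreeGroup.of 1 * FreeGroup.of 0 *
      (FreeGroup.of 1)⁻¹ * (FreeGroup.of 0)⁻¹ * (FreeGroup.of 1)⁻¹,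
    FreeGroup.of 0 ^ 2 * (FreeGroup.of 1 ^ 2)⁻¹ }

/-! Both relators have exponent sum zero, so sending every generator to `1 : ℤ` defines a
homomorphism onto the torsion-free group `ℤ`; it maps `σᵢⁿ` to `n`. -/

namespace S3ZRels

noncomputable def degree : PresentedGroup S3ZRels →* Multiplicative ℤ :=
  PresentedGroup.toGroup (f := fun _ => Multiplicative.ofAdd 1) <| by
    rintro r (rfl | rfl) <;> simp

@[simp]
lemma degree_of (i : Fin 2) : degree (PresentedGroup.of i) = Multiplicative.ofAdd 1 :=
  PresentedGroup.toGroup.of _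

lemma not_isOfFinOrder_of_pow (i : Fin 2) {n : ℕ} (hn : n ≠ 0) :
    ¬ IsOfFinOrder ((PresentedGroup.of i : PresentedGroup S3ZRels) ^ n) := by
  intro h
  have h' := (degree.isOfFinOrder h).eq_one'
  rw [map_pow, degree_of, ← ofAdd_nsmul, ofAdd_eq_one, nsmul_one] at h'
  exact hn (by exact_mod_cast h')

end S3ZRels

theorem stmt_10 :
    ¬ IsOfFinOrder ((PresentedGroup.of 0 : PresentedGroup S3ZRels) ^ 2) ∧
      Infinite (Subgroup.zpowers ((PresentedGroup.of 0 : PresentedGroup S3ZRels) ^ 2)) := by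
  have h := S3ZRels.not_isOfFinOrder_of_pow 0 two_ne_zero
  exact ⟨h, Set.infinite_coe_iff.2 (infinite_zpowers.2 h)⟩
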